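/- For every formula A, the axiom sequent A⊥, A has a cut-free proof in LLTN. -/

import Mathlib

/-- Formulae of propositional-variable-free linear logic. -/
inductive Fm : Type
  | zero | one | top | bot
  | tens (A B : Fm) | parr (A B : Fm)
  | plus (A B : Fm) | awith (A B : Fm)
  | quest (A : Fm) | bang (A : Fm)

/-- Linear negation (De Morgan duality). -/
def Fm.dual : Fm → Fm
  | .zero => .top
  | .top => .zero
  | .one => .bot
  | .bot => .one
  | .tens A B => .parr A.dual B.dual
  | .parr A B => .tens A.dual B.dual
  | .plus A B => .awith A.dual B.dual
  | .awith A B => .plus A.dual B.dual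
  | .quest A => .bang A.dual
  | .bang A => .quest A.dual

/-- A formula of the form ?C. -/
def IsQuest (A : Fm) : Prop := ∃ C, A = Fm.quest C

/-- ⅋⁰A = ⊥, ⅋ⁿ⁺¹A = (⅋ⁿA) ⅋ A. -/
def parrPow : ℕ → Fm → Fm
  | 0, _ => .bot
  | n + 1, A => .parr (parrPow n A) A

/-- ⊗⁰A = 1, ⊗ⁿ⁺¹A = (⊗ⁿA) ⊗ A. -/
def tensPow : ℕ → Fm → Fm
  | 0, _ => .one
  | n + 1, A => .tens (tensPow n A) A

/-- One-sided sequent calculus LL.  `Γ, A` is encoded as `Γ ++ [A]`. -/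
inductive LL : List Fm → Prop
  | one : LL [Fm.one]
  | bot {Γ} : LL Γ → LL (Γ ++ [Fm.bot])
  | top (Γ) : LL (Γ ++ [Fm.top])
  | tens {Γ Δ A B} : LL (Γ ++ [A]) → LL (Δ ++ [B]) → LL (Γ ++ Δ ++ [Fm.tens A B])
  | parr {Γ A B} : LL (Γ ++ [A, B]) → LL (Γ ++ [Fm.parr A B])
  | plusl {Γ A B} : LL (Γ ++ [A]) → LL (Γ ++ [Fm.plus A B])
  | plusr {Γ A B} : LL (Γ ++ [B]) → LL (Γ ++ [Fm.plus A B])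
  | awith {Γ A B} : LL (Γ ++ [A]) → LL (Γ ++ [B]) → LL (Γ ++ [Fm.awith A B])
  | der {Γ A} : LL (Γ ++ [A]) → LL (Γ ++ [Fm.quest A])
  | wk {Γ A} : LL Γ → LL (Γ ++ [Fm.quest A])
  | ctr {Γ A} : LL (Γ ++ [Fm.quest A, Fm.quest A]) → LL (Γ ++ [Fm.quest A])
  | prom {Γ A} : (∀ C ∈ Γ, IsQuest C) → LL (Γ ++ [A]) → LL (Γ ++ [Fm.bang A])
  | ex {Γ Δ A B} : LL (Γ ++ [B, A] ++ Δ) → LL (Γ ++ [A, B] ++ Δ)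
  | cut {Γ Δ A} : LL (Γ ++ [A]) → LL (Fm.dual A :: Δ) → LL (Γ ++ Δ)

/-- LLT: LL with the tensor rule replaced by NewTens. -/
inductive LLT : List Fm → Prop
  | one : LLT [Fm.one]
  | bot {Γ} : LLT Γ → LLT (Γ ++ [Fm.bot])
  | top (Γ) : LLT (Γ ++ [Fm.top])
  | newtens {Γ Δ Θ A B} : (∀ C ∈ Θ, IsQuest C) →
      LLT (Γ ++ Θ ++ [A]) → LLT (Δ ++ Θ ++ [B]) →
      LLT (Γ ++ Δ ++ Θ ++ [Fm.tens A B])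
  | parr {Γ A B} : LLT (Γ ++ [A, B]) → LLT (Γ ++ [Fm.parr A B])
  | plusl {Γ A B} : LLT (Γ ++ [A]) → LLT (Γ ++ [Fm.plus A B])
  | plusr {Γ A B} : LLT (Γ ++ [B]) → LLT (Γ ++ [Fm.plus A B])
  | awith {Γ A B} : LLT (Γ ++ [A]) → LLT (Γ ++ [B]) → LLT (Γ ++ [Fm.awith A B])
  | der {Γ A} : LLT (Γ ++ [A]) → LLT (Γ ++ [Fm.quest A])
  | wk {Γ A} : LLT Γ → LLT (Γ ++ [Fm.quest A])
  | ctr {Γ A} : LLT (Γ ++ [Fm.quest A, Fm.quest A]) → LLT (Γ ++ [Fm.quest A])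
  | prom {Γ A} : (∀ C ∈ Γ, IsQuest C) → LLT (Γ ++ [A]) → LLT (Γ ++ [Fm.bang A])
  | ex {Γ Δ A B} : LLT (Γ ++ [B, A] ++ Δ) → LLT (Γ ++ [A, B] ++ Δ)
  | cut {Γ Δ A} : LLT (Γ ++ [A]) → LLT (Fm.dual A :: Δ) → LLT (Γ ++ Δ)

/-- cc-free provability in LLT: LLT without cut and without contraction. -/
inductive LLTcc : List Fm → Prop
  | one : LLTcc [Fm.one]
  | bot {Γ} : LLTcc Γ → LLTcc (Γ ++ [Fm.bot])
  | top (Γ) : LLTcc (Γ ++ [Fm.top])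
  | newtens {Γ Δ Θ A B} : (∀ C ∈ Θ, IsQuest C) →
      LLTcc (Γ ++ Θ ++ [A]) → LLTcc (Δ ++ Θ ++ [B]) →
      LLTcc (Γ ++ Δ ++ Θ ++ [Fm.tens A B])
  | parr {Γ A B} : LLTcc (Γ ++ [A, B]) → LLTcc (Γ ++ [Fm.parr A B])
  | plusl {Γ A B} : LLTcc (Γ ++ [A]) → LLTcc (Γ ++ [Fm.plus A B])
  | plusr {Γ A B} : LLTcc (Γ ++ [B]) → LLTcc (Γ ++ [Fm.plus A B])
  | awith {Γ A B} : LLTcc (Γ ++ [A]) → LLTcc (Γ ++ [B]) → LLTcc (Γ ++ [Fm.awith A B])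
  | der {Γ A} : LLTcc (Γ ++ [A]) → LLTcc (Γ ++ [Fm.quest A])
  | wk {Γ A} : LLTcc Γ → LLTcc (Γ ++ [Fm.quest A])
  | prom {Γ A} : (∀ C ∈ Γ, IsQuest C) → LLTcc (Γ ++ [A]) → LLTcc (Γ ++ [Fm.bang A])
  | ex {Γ Δ A B} : LLTcc (Γ ++ [B, A] ++ Δ) → LLTcc (Γ ++ [A, B] ++ Δ)

/-- LLTN: LLT with contraction, weakening, dereliction and promotion replaced by
n-ary dereliction and the infinitary (!) rule. -/
inductive LLTN : List Fm → Prop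
  | one : LLTN [Fm.one]
  | bot {Γ} : LLTN Γ → LLTN (Γ ++ [Fm.bot])
  | top (Γ) : LLTN (Γ ++ [Fm.top])
  | newtens {Γ Δ Θ A B} : (∀ C ∈ Θ, IsQuest C) →
      LLTN (Γ ++ Θ ++ [A]) → LLTN (Δ ++ Θ ++ [B]) →
      LLTN (Γ ++ Δ ++ Θ ++ [Fm.tens A B])
  | parr {Γ A B} : LLTN (Γ ++ [A, B]) → LLTN (Γ ++ [Fm.parr A B])
  | plusl {Γ A B} : LLTN (Γ ++ [A]) → LLTN (Γ ++ [Fm.plus A B])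
  | plusr {Γ A B} : LLTN (Γ ++ [B]) → LLTN (Γ ++ [Fm.plus A B])
  | awith {Γ A B} : LLTN (Γ ++ [A]) → LLTN (Γ ++ [B]) → LLTN (Γ ++ [Fm.awith A B])
  | nder {Γ A} (n : ℕ) : LLTN (Γ ++ [parrPow n A]) → LLTN (Γ ++ [Fm.quest A])
  | bang {Γ A} : (∀ n : ℕ, LLTN (Γ ++ [tensPow n A])) → LLTN (Γ ++ [Fm.bang A])
  | ex {Γ Δ A B} : LLTN (Γ ++ [B, A] ++ Δ) → LLTN (Γ ++ [A, B] ++ Δ)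
  | cut {Γ Δ A} : LLTN (Γ ++ [A]) → LLTN (Fm.dual A :: Δ) → LLTN (Γ ++ Δ)

/-- Cut-free provability in LLTN. -/
inductive LLTNcf : List Fm → Prop
  | one : LLTNcf [Fm.one]
  | bot {Γ} : LLTNcf Γ → LLTNcf (Γ ++ [Fm.bot])
  | top (Γ) : LLTNcf (Γ ++ [Fm.top])
  | newtens {Γ Δ Θ A B} : (∀ C ∈ Θ, IsQuest C) →
      LLTNcf (Γ ++ Θ ++ [A]) → LLTNcf (Δ ++ Θ ++ [B]) →
      LLTNcf (Γ ++ Δ ++ Θ ++ [Fm.tens A B])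
  | parr {Γ A B} : LLTNcf (Γ ++ [A, B]) → LLTNcf (Γ ++ [Fm.parr A B])
  | plusl {Γ A B} : LLTNcf (Γ ++ [A]) → LLTNcf (Γ ++ [Fm.plus A B])
  | plusr {Γ A B} : LLTNcf (Γ ++ [B]) → LLTNcf (Γ ++ [Fm.plus A B])
  | awith {Γ A B} : LLTNcf (Γ ++ [A]) → LLTNcf (Γ ++ [B]) → LLTNcf (Γ ++ [Fm.awith A B])
  | nder {Γ A} (n : ℕ) : LLTNcf (Γ ++ [parrPow n A]) → LLTNcf (Γ ++ [Fm.quest A])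
  | bang {Γ A} : (∀ n : ℕ, LLTNcf (Γ ++ [tensPow n A])) → LLTNcf (Γ ++ [Fm.bang A])
  | ex {Γ Δ A B} : LLTNcf (Γ ++ [B, A] ++ Δ) → LLTNcf (Γ ++ [A, B] ++ Δ)

/-- Γ has a bounded proof in LLTN: either a cut-free proof, or a single final cut
whose premises (a proof of a single formula A and a proof of A⊥, Γ) are cut-free. -/
def BoundedLLTN (Γ : List Fm) : Prop :=
  LLTNcf Γ ∨ ∃ A : Fm, LLTNcf [A] ∧ LLTNcf (Fm.dual A :: Γ)

/-- The duplicator formula dup(A) = !( ?(A⊥) ⅋ (!A ⊗ !A) ). -/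
def dup (A : Fm) : Fm :=
  Fm.bang (Fm.parr (Fm.quest A.dual) (Fm.tens (Fm.bang A) (Fm.bang A)))

/-! Induction on `A`, expanding the axiom one connective at a time. The only interesting case is
the exponential pair `?A`, `!A⊥`: the `n`-th premise of the (!) rule is closed by the `n`-ary
dereliction with the same `n`, which leaves `⅋ⁿA, ⊗ⁿA⊥`, an expansion of `n` copies of the axiom
for `A`. -/

theorem LLTNcf.perm {Γ Δ : List Fm} (h : LLTNcf Γ) (hp : Γ.Perm Δ) : LLTNcf Δ := by
  suffices ∀ Γ₀ Δ₀, LLTNcf (Γ₀ ++ Γ ++ Δ₀) → LLTNcf (Γ₀ ++ Δ ++ Δ₀) by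
    simpa using this [] [] (by simpa using h)
  clear h
  induction hp with
  | nil => exact fun _ _ h => h
  | cons x _ ih =>
    intro Γ₀ Δ₀ h
    simpa using ih (Γ₀ ++ [x]) Δ₀ (by simpa using h)
  | swap x y l =>
    intro Γ₀ Δ₀ h
    simpa using LLTNcf.ex (Γ := Γ₀) (Δ := l ++ Δ₀) (by simpa using h)
  | trans _ _ ih₁ ih₂ => exact fun Γ₀ Δ₀ h => ih₂ Γ₀ Δ₀ (ih₁ Γ₀ Δ₀ h)

theorem LLTNcf.swap {A B : Fm} (h : LLTNcf [A, B]) : LLTNcf [B, A] :=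
  h.perm (.swap B A [])

theorem LLTNcf.one_bot : LLTNcf [Fm.one, Fm.bot] :=
  LLTNcf.bot (Γ := [Fm.one]) .one

theorem LLTNcf.parr_tens {A A' B B' : Fm} (hA : LLTNcf [A, A']) (hB : LLTNcf [B, B']) :
    LLTNcf [Fm.parr A B, Fm.tens A' B'] := by
  have hAB : LLTNcf [A, B, Fm.tens A' B'] :=
    LLTNcf.newtens (Γ := [A]) (Δ := [B]) (Θ := []) (by simp) hA hB
  have hrot : LLTNcf [Fm.tens A' B', A, B] :=
    hAB.perm (List.perm_append_comm (l₁ := [A, B]) (l₂ := [Fm.tens A' B']))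
  exact (LLTNcf.parr (Γ := [Fm.tens A' B']) hrot).swap

theorem LLTNcf.awith_plus {A A' B B' : Fm} (hA : LLTNcf [A, A']) (hB : LLTNcf [B, B']) :
    LLTNcf [Fm.awith A B, Fm.plus A' B'] := by
  have hA' : LLTNcf [Fm.plus A' B', A] := (LLTNcf.plusl (Γ := [A]) hA).swap
  have hB' : LLTNcf [Fm.plus A' B', B] := (LLTNcf.plusr (Γ := [B]) hB).swap
  exact (LLTNcf.awith (Γ := [Fm.plus A' B']) hA' hB').swap

theorem LLTNcf.parrPow_tensPow {A B : Fm} (h : LLTNcf [A, B]) (n : ℕ) :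
    LLTNcf [parrPow n A, tensPow n B] := by
  induction n with
  | zero => exact LLTNcf.one_bot.swap
  | succ n ih =>
    have hAB : LLTNcf [parrPow n A, A, Fm.tens (tensPow n B) B] :=
      LLTNcf.newtens (Γ := [parrPow n A]) (Δ := [A]) (Θ := []) (by simp) ih h
    have hrot : LLTNcf [Fm.tens (tensPow n B) B, parrPow n A, A] :=
      hAB.perm (List.perm_append_comm (l₁ := [parrPow n A, A]) (l₂ := [_]))
    exact (LLTNcf.parr (Γ := [_]) hrot).swap

theorem LLTNcf.quest_bang {A B : Fm} (h : LLTNcf [A, B]) :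
    LLTNcf [Fm.quest A, Fm.bang B] :=
  LLTNcf.bang (Γ := [Fm.quest A]) fun n =>
    (LLTNcf.nder (Γ := [tensPow n B]) n (h.parrPow_tensPow n).swap).swap

/-- For every formula A, the axiom sequent A⊥, A has a cut-free
proof in LLTN. -/
theorem lltn_axiom (A : Fm) : LLTNcf [Fm.dual A, A] := by
  induction A with
  | zero => exact (LLTNcf.top [Fm.zero]).swap
  | one => exact LLTNcf.one_bot.swap
  | top => exact LLTNcf.top [Fm.zero]
  | bot => exact LLTNcf.one_bot
  | tens A B ihA ihB => exact ihA.parr_tens ihB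
  | parr A B ihA ihB => exact (ihA.swap.parr_tens ihB.swap).swap
  | plus A B ihA ihB => exact ihA.awith_plus ihB
  | awith A B ihA ihB => exact (ihA.swap.awith_plus ihB.swap).swap
  | quest A ih => exact ih.swap.quest_bang.swap
  | bang A ih => exact ih.quest_bang
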